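/- arXiv:1109.0244 — 4 statements merged into one kernel-verified Lean document; each statement's English description precedes it below -/
import Mathlib

section
/- Suppose G is a finitely generated infinite group that is not virtually nilpotent and contains an element of infinite order. If there exist c, δ > 0 such that every finite subset A of G with ⟨A⟩ not virtually nilpotent satisfies |A³| ≥ c|A|^{1+δ}, then δ ≤ 1. -/
open Pointwise

def VirtuallyNilpotent (G : Type*) [Group G] : Prop :=
  ∃ H : Subgroup G, H.FiniteIndex ∧ Group.IsNilpotent H

/-!
Let `S` generate `G` and `T = S ∪ {1}`. The sets `Aₙ = T ∪ {1, x, …, xⁿ⁻¹}` generate `G` and have at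
least `n` elements, since `x` has infinite order. Writing every element of `Aₙ` as `xⁱ t` with
`i < n`, `t ∈ T`, a triple product is `xⁱ t t' xʲ t''` (middle factor in `T`) or `xⁱ t xʲ⁺ᵏ t''`
(middle factor a power of `x`), so `|Aₙ³| ≤ 2 |T²| |T| n²`. The growth hypothesis then gives
`c n^(1+δ) = O(n²)`, forcing `δ ≤ 1`.
-/

open Finset

theorem VirtuallyNilpotent.of_mulEquiv {G H : Type*} [Group G] [Group H] (e : G ≃* H) :
    VirtuallyNilpotent G → VirtuallyNilpotent H
  | ⟨K, hK, _⟩ => ⟨K.map e, ⟨by rw [K.index_map_equiv e]; exact hK.index_ne_zero⟩,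
      Group.nilpotent_of_mulEquiv (K.equivMapOfInjective _ e.injective)⟩

theorem not_virtuallyNilpotent_closure_of_eq_top {G : Type*} [Group G]
    (hG : ¬ VirtuallyNilpotent G) {s : Set G} (hs : Subgroup.closure s = ⊤) :
    ¬ VirtuallyNilpotent (Subgroup.closure s) := by
  rw [hs]
  exact fun h ↦ hG (h.of_mulEquiv Subgroup.topEquiv)

theorem le_of_forall_mul_rpow_le {a b c K : ℝ} (hc : 0 < c)
    (h : ∀ n : ℕ, 0 < n → c * (n : ℝ) ^ a ≤ K * (n : ℝ) ^ b) : a ≤ b := by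
  by_contra! hab
  have htend : Filter.Tendsto (fun n : ℕ ↦ (n : ℝ) ^ (a - b)) Filter.atTop Filter.atTop :=
    (tendsto_rpow_atTop (sub_pos.mpr hab)).comp tendsto_natCast_atTop_atTop
  obtain ⟨n, hbig, hn⟩ :=
    ((htend.eventually_gt_atTop (K / c)).and (Filter.eventually_gt_atTop 0)).exists
  have hnpos : (0 : ℝ) < n := by exact_mod_cast hn
  have hbounded : c * (n : ℝ) ^ (a - b) ≤ K := by
    have := h n hn
    rw [← sub_add_cancel a b, Real.rpow_add hnpos, ← mul_assoc] at this
    exact le_of_mul_le_mul_right this (by positivity)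
  rw [div_lt_iff₀ hc] at hbig
  linarith

section Powers

variable {G : Type*} [Group G] [DecidableEq G]

theorem card_image_pow_range {x : G} (hx : ¬ IsOfFinOrder x) (n : ℕ) :
    #((range n).image (x ^ ·)) = n := by
  rw [card_image_of_injective _ (injective_pow_iff_not_isOfFinOrder.mpr hx), card_range]

theorem exists_pow_mul_of_mem_union {T : Finset G} (hT : 1 ∈ T) {x : G} {n : ℕ} (hn : 0 < n)
    {a : G} (ha : a ∈ T ∪ (range n).image (x ^ ·)) : ∃ i < n, ∃ t ∈ T, a = x ^ i * t := by
  rcases mem_union.mp ha with ha | ha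
  · exact ⟨0, hn, a, ha, by simp⟩
  · obtain ⟨i, hi, rfl⟩ := mem_image.mp ha
    exact ⟨i, mem_range.mp hi, 1, hT, by simp⟩

theorem union_image_pow_range_pow_three_subset {T : Finset G} (hT : 1 ∈ T) (x : G) {n : ℕ}
    (hn : 0 < n) :
    (T ∪ (range n).image (x ^ ·)) ^ 3 ⊆
      (range n).image (x ^ ·) * (T * T) * (range (2 * n)).image (x ^ ·) * T := by
  intro a ha
  rw [pow_three', mem_mul] at ha
  obtain ⟨_, hbc, d, hd, rfl⟩ := ha
  obtain ⟨b, hb, c, hc, rfl⟩ := mem_mul.mp hbc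
  obtain ⟨i, hi, s, hs, rfl⟩ := exists_pow_mul_of_mem_union hT hn hb
  obtain ⟨k, hk, u, hu, rfl⟩ := exists_pow_mul_of_mem_union hT hn hd
  have hpow : ∀ {m M : ℕ}, m < M → x ^ m ∈ (range M).image (x ^ ·) :=
    fun hm ↦ mem_image_of_mem _ (mem_range.mpr hm)
  rcases mem_union.mp hc with hc | hc
  · simpa only [mul_assoc] using
      mul_mem_mul (mul_mem_mul (mul_mem_mul (hpow hi) (mul_mem_mul hs hc)) (hpow (by omega))) hu
  · obtain ⟨j, hj, rfl⟩ := mem_image.mp hc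
    have hjk : j + k < 2 * n := by rw [mem_range] at hj; omega
    convert mul_mem_mul (mul_mem_mul (mul_mem_mul (hpow hi) (mul_mem_mul hs hT)) (hpow hjk)) hu
      using 1
    simp only [mul_one, pow_add, mul_assoc]

theorem card_union_image_pow_range_pow_three_le {T : Finset G} (hT : 1 ∈ T) (x : G) {n : ℕ}
    (hn : 0 < n) : #((T ∪ (range n).image (x ^ ·)) ^ 3) ≤ 2 * #(T * T) * #T * n ^ 2 := by
  have hP : ∀ m, #((range m).image (x ^ ·)) ≤ m := fun m ↦ card_image_le.trans_eq (card_range m)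
  calc #((T ∪ (range n).image (x ^ ·)) ^ 3)
      ≤ #((range n).image (x ^ ·) * (T * T) * (range (2 * n)).image (x ^ ·) * T) :=
        card_le_card (union_image_pow_range_pow_three_subset hT x hn)
    _ ≤ #((range n).image (x ^ ·)) * #(T * T) * #((range (2 * n)).image (x ^ ·)) * #T := by
        grw [card_mul_le, card_mul_le, card_mul_le]
    _ ≤ n * #(T * T) * (2 * n) * #T := by grw [hP, hP]
    _ = 2 * #(T * T) * #T * n ^ 2 := by ring

end Powers

theorem helfgott_exponent_le_one_general {G : Type*} [Group G] [DecidableEq G]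
    (hfg : Group.FG G) (hnotnil : ¬ VirtuallyNilpotent G)
    (x : G) (hx : ¬ IsOfFinOrder x)
    (c δ : ℝ) (hc : 0 < c)
    (hHelf : ∀ A : Finset G, ¬ VirtuallyNilpotent ↥(Subgroup.closure (A : Set G)) →
      c * (A.card : ℝ) ^ (1 + δ) ≤ ((A ^ 3).card : ℝ)) :
    δ ≤ 1 := by
  by_contra! hδ
  obtain ⟨S, hS⟩ := hfg.out
  set T := insert 1 S
  suffices 1 + δ ≤ 2 by linarith
  refine le_of_forall_mul_rpow_le hc (K := 2 * #(T * T) * #T) fun n hn ↦ ?_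
  set A := T ∪ (range n).image (x ^ ·)
  have hA : Subgroup.closure (A : Set G) = ⊤ := eq_top_iff.mpr <|
    hS ▸ Subgroup.closure_mono (coe_subset.mpr ((subset_insert 1 S).trans subset_union_left))
  have hnA : (n : ℝ) ≤ #A := by
    exact_mod_cast (card_image_pow_range hx n).symm.trans_le (card_le_card subset_union_right)
  calc c * (n : ℝ) ^ (1 + δ) ≤ c * (#A : ℝ) ^ (1 + δ) := by gcongr
    _ ≤ #(A ^ 3) := hHelf A (not_virtuallyNilpotent_closure_of_eq_top hnotnil hA)
    _ ≤ 2 * #(T * T) * #T * (n : ℝ) ^ (2 : ℝ) := by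
      rw [Real.rpow_two]
      exact_mod_cast card_union_image_pow_range_pow_three_le (mem_insert_self 1 S) x hn

/-- Helfgott type growth forces `δ ≤ 1`. -/
theorem helfgott_exponent_le_one {G : Type*} [Group G] [DecidableEq G] [Infinite G]
    (hfg : Group.FG G) (hnotnil : ¬ VirtuallyNilpotent G)
    (x : G) (hx : ¬ IsOfFinOrder x)
    (c δ : ℝ) (hc : 0 < c) (hδ : 0 < δ)
    (hHelf : ∀ A : Finset G, ¬ VirtuallyNilpotent ↥(Subgroup.closure (A : Set G)) →
      c * (A.card : ℝ) ^ (1 + δ) ≤ ((A ^ 3).card : ℝ)) :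
    δ ≤ 1 :=
  helfgott_exponent_le_one_general hfg hnotnil x hx c δ hc hHelf
end

section
/- If G is a group possessing an element z of infinite order whose centralizer C(z) in G contains a finitely generated subgroup H that is not virtually nilpotent, then for every c, δ > 0 there exists a finite subset A of G with ⟨A⟩ not virtually nilpotent and |A³| < c|A|^{1+δ}; that is, G does not have Helfgott type growth. -/
open Pointwise

section PowersUpTo

variable {M : Type*} [Monoid M] [DecidableEq M]

def powersUpTo (z : M) (N : ℕ) : Finset M :=
  (Finset.range (N + 1)).image (z ^ ·)

lemma mem_powersUpTo {z x : M} {N : ℕ} : x ∈ powersUpTo z N ↔ ∃ i ≤ N, z ^ i = x := by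
  simp [powersUpTo]

lemma one_mem_powersUpTo (z : M) (N : ℕ) : 1 ∈ powersUpTo z N :=
  mem_powersUpTo.2 ⟨0, N.zero_le, pow_zero z⟩

lemma card_powersUpTo_le (z : M) (N : ℕ) : (powersUpTo z N).card ≤ N + 1 :=
  Finset.card_image_le.trans (Finset.card_range _).le

lemma card_powersUpTo {G : Type*} [Group G] [DecidableEq G] {z : G} (hz : ¬IsOfFinOrder z)
    (N : ℕ) : (powersUpTo z N).card = N + 1 := by
  rw [powersUpTo, Finset.card_image_of_injective _ (injective_pow_iff_not_isOfFinOrder.2 hz),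
    Finset.card_range]

lemma mul_powersUpTo_pow_subset {z : M} {B : Finset M} (hB : ∀ b ∈ B, Commute z b)
    (n N : ℕ) : (B * powersUpTo z N) ^ n ⊆ B ^ n * powersUpTo z (n * N) := by
  induction n with
  | zero => simpa using one_mem_powersUpTo z 0
  | succ n ih =>
    intro x hx
    rw [pow_succ] at hx
    obtain ⟨y, hy, w, hw, rfl⟩ := Finset.mem_mul.1 hx
    obtain ⟨a, ha, _, hi, rfl⟩ := Finset.mem_mul.1 (ih hy)
    obtain ⟨b, hb, _, hj, rfl⟩ := Finset.mem_mul.1 hw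
    obtain ⟨i, hiN, rfl⟩ := mem_powersUpTo.1 hi
    obtain ⟨j, hjN, rfl⟩ := mem_powersUpTo.1 hj
    have hswap : a * z ^ i * (b * z ^ j) = a * b * z ^ (i + j) := by
      rw [pow_add, mul_assoc a, ← mul_assoc (z ^ i), ((hB b hb).pow_left i).eq]
      simp only [mul_assoc]
    rw [hswap, pow_succ]
    exact Finset.mul_mem_mul (Finset.mul_mem_mul ha hb)
      (mem_powersUpTo.2 ⟨i + j, by rw [Nat.succ_mul]; omega, rfl⟩)

lemma card_mul_powersUpTo_pow_le {z : M} {B : Finset M} (hB : ∀ b ∈ B, Commute z b)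
    (n N : ℕ) : ((B * powersUpTo z N) ^ n).card ≤ (B ^ n).card * (n * N + 1) :=
  calc ((B * powersUpTo z N) ^ n).card
      ≤ (B ^ n * powersUpTo z (n * N)).card :=
        Finset.card_le_card (mul_powersUpTo_pow_subset hB n N)
    _ ≤ (B ^ n).card * (n * N + 1) :=
        Finset.card_mul_le.trans (Nat.mul_le_mul_left _ (card_powersUpTo_le z _))

lemma closure_mul_powersUpTo {G : Type*} [Group G] [DecidableEq G] {H : Subgroup G}
    {B : Finset G} (hB : Subgroup.closure (B : Set G) = H) {z : G} (hz : z ∈ H) (N : ℕ) :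
    Subgroup.closure ((B * powersUpTo z N : Finset G) : Set G) = H := by
  refine le_antisymm ((Subgroup.closure_le H).2 fun x hx => ?_) ?_
  · obtain ⟨b, hb, _, hi, rfl⟩ := Finset.mem_mul.1 hx
    obtain ⟨i, -, rfl⟩ := mem_powersUpTo.1 hi
    exact H.mul_mem (hB ▸ Subgroup.subset_closure hb) (H.pow_mem hz i)
  · exact hB ▸ Subgroup.closure_mono
      (Finset.coe_subset.2 (Finset.subset_mul_left B (one_mem_powersUpTo z N)))

end PowersUpTo

lemma exists_nat_linear_lt_rpow (a b : ℝ) {c δ : ℝ} (hc : 0 < c) (hδ : 0 < δ) :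
    ∃ N : ℕ, a * N + b < c * (N : ℝ) ^ (1 + δ) := by
  have htend : Filter.Tendsto (fun n : ℕ => (n : ℝ) ^ δ) Filter.atTop Filter.atTop :=
    (tendsto_rpow_atTop hδ).comp tendsto_natCast_atTop_atTop
  obtain ⟨N, hNδ, hN1⟩ :=
    ((htend.eventually_gt_atTop ((|a| + |b|) / c)).and (Filter.eventually_ge_atTop 1)).exists
  have hN : (1 : ℝ) ≤ N := by exact_mod_cast hN1
  have hcN : |a| + |b| < c * (N : ℝ) ^ δ := by rwa [div_lt_iff₀' hc] at hNδ
  refine ⟨N, ?_⟩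
  calc a * N + b ≤ (|a| + |b|) * N := by nlinarith [le_abs_self a, le_abs_self b, abs_nonneg b]
    _ < c * (N : ℝ) ^ δ * N := mul_lt_mul_of_pos_right hcN (by linarith)
    _ = c * (N : ℝ) ^ (1 + δ) := by
      rw [Real.rpow_add (by linarith), Real.rpow_one]; ring

/-- a big centraliser of an infinite order element kills Helfgott growth. -/
theorem no_helfgott_of_centralizer {G : Type*} [Group G] [DecidableEq G]
    (z : G) (hz : ¬ IsOfFinOrder z)
    (H : Subgroup G) (hHle : H ≤ Subgroup.centralizer {z}) (hzH : z ∈ H)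
    (hfg : H.FG) (hnil : ¬ VirtuallyNilpotent ↥H)
    (c δ : ℝ) (hc : 0 < c) (hδ : 0 < δ) :
    ∃ A : Finset G, ¬ VirtuallyNilpotent ↥(Subgroup.closure (A : Set G)) ∧
      ((A ^ 3).card : ℝ) < c * (A.card : ℝ) ^ (1 + δ) := by
  obtain ⟨S, hS⟩ := hfg
  set B := insert 1 S
  have hBH : Subgroup.closure (B : Set G) = H := by
    rw [Finset.coe_insert, Subgroup.closure_insert_one, hS]
  have hBz : ∀ b ∈ B, Commute z b := fun b hb =>
    (Subgroup.mem_centralizer_singleton_iff.1 (hHle (hBH ▸ Subgroup.subset_closure hb))).symm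
  obtain ⟨N, hN⟩ := exists_nat_linear_lt_rpow (3 * (B ^ 3).card) (B ^ 3).card hc hδ
  refine ⟨B * powersUpTo z N, by rwa [closure_mul_powersUpTo hBH hzH], ?_⟩
  have hcard : (N : ℝ) ≤ (B * powersUpTo z N).card := by
    have := Finset.card_le_card_mul_left (t := powersUpTo z N) (Finset.insert_nonempty 1 S)
    rw [card_powersUpTo hz] at this
    exact_mod_cast this.trans' N.le_succ
  calc (((B * powersUpTo z N) ^ 3).card : ℝ) ≤ (B ^ 3).card * (3 * N + 1) := by
        exact_mod_cast card_mul_powersUpTo_pow_le hBz 3 N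
    _ = 3 * (B ^ 3).card * N + (B ^ 3).card := by ring
    _ < c * (N : ℝ) ^ (1 + δ) := hN
    _ ≤ c * ((B * powersUpTo z N).card : ℝ) ^ (1 + δ) := by
        gcongr
end

section
/- Let N be a finite group and G = F₂ × N where F₂ = ⟨x, y⟩ is the free group of rank 2. Then the set A = {(x, n) : n ∈ N} ∪ {(y, n) : n ∈ N} satisfies |A| = 2|N|, the subgroup generated by A contains a nonabelian free subgroup (hence is not virtually nilpotent), and |A³| = 8|N|. -/
/-!
Since `A = {x, y} × N`, we get `A³ = {x, y}³ × N³ = {x, y}³ × N`, and the eight positive words of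
length three are distinct reduced words, so `|A³| = 8|N|`. The first factor embeds `F₂` in `⟨A⟩`.
A finite-index subgroup `K` of `F₂` is free (Nielsen–Schreier) and contains non-commuting powers
`xᵐ`, `yᵏ`, so it has at least two free generators and maps onto `S₃`, whose centre is trivial.
Hence `K` is not nilpotent, and a group containing `F₂` is not virtually nilpotent.
-/

open Pointwise

namespace FreeGroup

variable {α : Type*}

theorem prod_map_of_eq_mk (l : List α) : (l.map of).prod = mk (l.map (·, true)) := by
  induction l with
  | nil => rfl
  | cons a l ih => rw [List.map_cons, List.prod_cons, ih]; rfl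

theorem toWord_prod_map_of [DecidableEq α] (l : List α) :
    (l.map of).prod.toWord = l.map (·, true) := by
  rw [prod_map_of_eq_mk, toWord_mk, IsReduced.reduce_eq]
  induction l with
  | nil => exact IsReduced.nil
  | cons a l ih =>
    cases l with
    | nil => exact IsReduced.singleton
    | cons b l => exact isReduced_cons_cons.2 ⟨fun _ => rfl, ih⟩

theorem prod_map_of_injective : Function.Injective fun l : List α => (l.map of).prod := by
  classical
  exact fun l l' h => List.map_injective_iff.2 (fun _ _ h => (Prod.mk.inj h).1)
    (by simpa only [toWord_prod_map_of] using congrArg toWord h)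

theorem of_pow_mul_of_pow_ne {a b : α} (hab : a ≠ b) {m k : ℕ} (hm : m ≠ 0) (hk : k ≠ 0) :
    of a ^ m * of b ^ k ≠ of b ^ k * of a ^ m := by
  classical
  intro h
  have hw : ((List.replicate m a ++ List.replicate k b).map of).prod =
      ((List.replicate k b ++ List.replicate m a).map of).prod := by
    simpa only [List.map_append, List.prod_append, List.map_replicate, List.prod_replicate]
  have hl := prod_map_of_injective hw
  obtain ⟨m, rfl⟩ := Nat.exists_eq_succ_of_ne_zero hm
  obtain ⟨k, rfl⟩ := Nat.exists_eq_succ_of_ne_zero hk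
  simp only [List.replicate_succ, List.cons_append, List.cons.injEq] at hl
  exact hab hl.1

theorem card_image_of_pow [DecidableEq α] (s : Finset α) (n : ℕ) :
    ((s.image of) ^ n).card = s.card ^ n := by
  refine le_antisymm ((Finset.card_pow_le).trans ?_) ?_
  · rw [Finset.card_image_of_injective _ of_injective]
  · calc s.card ^ n = (Fintype.piFinset fun _ : Fin n => s).card := by simp
      _ = ((Fintype.piFinset fun _ : Fin n => s).image
            fun f => ((List.ofFn f).map of).prod).card :=
          (Finset.card_image_of_injective _
            (prod_map_of_injective.comp List.ofFn_injective)).symm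
      _ ≤ ((s.image of) ^ n).card := by
          refine Finset.card_le_card fun w hw => ?_
          obtain ⟨f, hf, rfl⟩ := Finset.mem_image.1 hw
          rw [Fintype.mem_piFinset] at hf
          exact Finset.mem_pow.2 ⟨fun i => ⟨of (f i), Finset.mem_image_of_mem _ (hf i)⟩,
            by rw [List.map_ofFn]; rfl⟩

end FreeGroup

namespace Equiv.Perm

theorem not_isNilpotent_fin_three : ¬ Group.IsNilpotent (Perm (Fin 3)) := fun _ =>
  Group.IsNilpotent.center_ne_bot (Perm (Fin 3)) <| by
    ext g
    rw [Subgroup.mem_center_iff, Subgroup.mem_bot]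
    revert g
    decide

end Equiv.Perm

namespace IsFreeGroup

variable {G : Type*} [Group G] [IsFreeGroup G]

open Equiv in
theorem not_isNilpotent [Nontrivial (Generators G)] : ¬ Group.IsNilpotent G := by
  classical
  obtain ⟨s, t, hst⟩ := exists_pair_ne (Generators G)
  let ρ : G →* Perm (Fin 3) := lift fun u => if u = s then swap 0 1 else swap 1 2
  have hρ : Function.Surjective ρ := by
    rw [← MonoidHom.range_eq_top, eq_top_iff, ← Subgroup.closure_eq_top_of_mclosure_eq_top
      (Perm.mclosure_swap_castSucc_succ 2), Subgroup.closure_le]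
    rintro _ ⟨i, rfl⟩
    fin_cases i
    · exact ⟨of s, by simp [ρ, lift_of]⟩
    · exact ⟨of t, by simp [ρ, lift_of, hst.symm]⟩
  intro _
  exact Perm.not_isNilpotent_fin_three (Group.nilpotent_of_surjective ρ hρ)

theorem commute_of_subsingleton [Subsingleton (Generators G)] (a b : G) : Commute a b := by
  have hcomm : ∀ x ∈ Set.range (FreeGroup.of : Generators G → _), ∀ y ∈ Set.range FreeGroup.of,
      x * y = y * x := by
    rintro _ ⟨u, rfl⟩ _ ⟨v, rfl⟩
    rw [Subsingleton.elim u v]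
  have hmem (w : FreeGroup (Generators G)) :
      w ∈ Set.centralizer (Set.centralizer (Set.range FreeGroup.of)) :=
    Subgroup.closure_le_centralizer_centralizer _ (by rw [FreeGroup.closure_range_of]; trivial)
  apply (toFreeGroup G).injective
  rw [map_mul, map_mul]
  exact Set.centralizer_centralizer_comm_of_comm hcomm _ (hmem _) _ (hmem _)

end IsFreeGroup

theorem VirtuallyNilpotent.of_injective {G H : Type*} [Group G] [Group H] {f : G →* H}
    (hf : Function.Injective f) (hH : VirtuallyNilpotent H) : VirtuallyNilpotent G := by
  obtain ⟨K, hK, hKnil⟩ := hH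
  refine ⟨K.comap f, ?_, ?_⟩
  · rw [Subgroup.finiteIndex_iff, Subgroup.index_comap]
    exact Subgroup.FiniteIndex.index_ne_zero
  · let g : K.comap f →* K := (f.comp (K.comap f).subtype).codRestrict K fun x => x.2
    have hg : Function.Injective g := fun x y h =>
      Subtype.ext (hf (congrArg Subtype.val h))
    exact (Group.isNilpotent_congr (MonoidHom.ofInjective hg)).2 inferInstance

theorem FreeGroup.not_virtuallyNilpotent {α : Type*} [Nontrivial α] :
    ¬ VirtuallyNilpotent (FreeGroup α) := by
  rintro ⟨K, hK, hKnil⟩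
  obtain ⟨a, b, hab⟩ := exists_pair_ne α
  obtain ⟨m, hm, -, ha⟩ := K.exists_pow_mem_of_index_ne_zero hK.index_ne_zero (of a)
  obtain ⟨k, hk, -, hb⟩ := K.exists_pow_mem_of_index_ne_zero hK.index_ne_zero (of b)
  have : Nontrivial (IsFreeGroup.Generators K) := by
    by_contra h
    rw [not_nontrivial_iff_subsingleton] at h
    exact of_pow_mul_of_pow_ne hab hm.ne' hk.ne'
      (congrArg Subtype.val (IsFreeGroup.commute_of_subsingleton ⟨_, ha⟩ ⟨_, hb⟩).eq)
  exact IsFreeGroup.not_isNilpotent hKnil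

theorem free_times_finite_example_general {N : Type*} [Group N] [Fintype N]
    [DecidableEq (FreeGroup Bool × N)]
    (A : Finset (FreeGroup Bool × N))
    (hA : A = ((Finset.univ : Finset Bool) ×ˢ (Finset.univ : Finset N)).image
      fun p => (FreeGroup.of p.1, p.2)) :
    A.card = 2 * Fintype.card N ∧
      (∃ f : FreeGroup Bool →* FreeGroup Bool × N, Function.Injective f ∧
        f.range ≤ Subgroup.closure (A : Set (FreeGroup Bool × N))) ∧
      ¬ VirtuallyNilpotent ↥(Subgroup.closure (A : Set (FreeGroup Bool × N))) ∧
      (A ^ 3).card = 8 * Fintype.card N := by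
  have hAprod : A = (Finset.univ.image FreeGroup.of) ×ˢ Finset.univ := by
    ext ⟨w, n⟩
    simp [hA, -Fintype.univ_bool]
  have hrange : (MonoidHom.inl (FreeGroup Bool) N).range ≤ Subgroup.closure (A : Set _) := by
    rw [MonoidHom.range_eq_map, ← FreeGroup.closure_range_of, MonoidHom.map_closure,
      Subgroup.closure_le]
    rintro _ ⟨_, ⟨b, rfl⟩, rfl⟩
    exact Subgroup.subset_closure (by simp [hAprod, -Fintype.univ_bool])
  have hinl : Function.Injective (MonoidHom.inl (FreeGroup Bool) N) :=
    fun _ _ h => congrArg Prod.fst h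
  refine ⟨?_, ⟨_, hinl, hrange⟩, ?_, ?_⟩
  · rw [hAprod, Finset.card_product, Finset.card_image_of_injective _ FreeGroup.of_injective]
    simp
  · exact fun h => FreeGroup.not_virtuallyNilpotent
      (h.of_injective (f := (MonoidHom.inl _ _).codRestrict _ fun w => hrange ⟨w, rfl⟩)
        fun _ _ h => hinl (congrArg Subtype.val h))
  · classical
    obtain rfl := Subsingleton.elim ‹DecidableEq (FreeGroup Bool × N)› instDecidableEqProd
    rw [hAprod, Finset.product_pow, Finset.univ_pow three_ne_zero, Finset.card_product,
      FreeGroup.card_image_of_pow, Finset.card_univ, Finset.card_univ, Fintype.card_bool]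
    rfl

/-- the example `A = {(x,n),(y,n) : n ∈ N}` in `F₂ × N`. -/
theorem free_times_finite_example {N : Type*} [Group N] [Fintype N] [DecidableEq N]
    [DecidableEq (FreeGroup Bool × N)]
    (A : Finset (FreeGroup Bool × N))
    (hA : A = ((Finset.univ : Finset Bool) ×ˢ (Finset.univ : Finset N)).image
      fun p => (FreeGroup.of p.1, p.2)) :
    A.card = 2 * Fintype.card N ∧
      (∃ f : FreeGroup Bool →* FreeGroup Bool × N, Function.Injective f ∧
        f.range ≤ Subgroup.closure (A : Set (FreeGroup Bool × N))) ∧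
      ¬ VirtuallyNilpotent ↥(Subgroup.closure (A : Set (FreeGroup Bool × N))) ∧
      (A ^ 3).card = 8 * Fintype.card N :=
  free_times_finite_example_general A hA
end

section
/- Let N be a finite normal subgroup of a group G, and suppose G has Helfgott type growth with constants c, δ > 0 (with exceptions the virtually nilpotent generated subgroups). Then G/N has Helfgott type growth with constants c·|N|^δ and δ. -/
/-!
Lift `S ⊆ G/N` to its full preimage `B ⊆ G`, a union of `|S|` cosets of `N`, so `|B| = |N|·|S|`.
The subgroup generated by `B` maps onto `⟨S⟩`, so it is not virtually nilpotent either and `B`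
grows: `c (|N|·|S|)^(1+δ) ≤ |B³|`. Since `B³` lies in the preimage of `S³`, `|B³| ≤ |N|·|S³|`;
dividing by `|N|` gives the claim.
-/

open Pointwise

lemma VirtuallyNilpotent.of_surjective {G K : Type*} [Group G] [Group K] {f : G →* K}
    (hf : Function.Surjective f) (h : VirtuallyNilpotent G) : VirtuallyNilpotent K := by
  obtain ⟨H, hH, hHnil⟩ := h
  refine ⟨H.map f, ⟨fun h0 => hH.index_ne_zero ?_⟩,
    Group.nilpotent_of_surjective _ (f.subgroupMap_surjective H)⟩
  simpa [h0] using H.index_map_dvd hf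

lemma VirtuallyNilpotent.closure_image {G K : Type*} [Group G] [Group K] (f : G →* K) {s : Set G}
    (h : VirtuallyNilpotent (Subgroup.closure s)) :
    VirtuallyNilpotent (Subgroup.closure (f '' s)) := by
  rw [← MonoidHom.map_closure]
  exact h.of_surjective (f.subgroupMap_surjective _)

namespace QuotientGroup

variable {G : Type*} [Group G] (N : Subgroup G) [Finite N]

instance finite_preimage_mk (t : Set (G ⧸ N)) [Finite t] : Finite (mk ⁻¹' t : Set G) :=
  Finite.of_equiv _ (preimageMkEquivSubgroupProdSet N t).symm

noncomputable def preimageMkFinset (T : Finset (G ⧸ N)) : Finset G :=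
  (Set.toFinite (mk ⁻¹' (T : Set (G ⧸ N)))).toFinset

variable {N}

@[simp]
lemma coe_preimageMkFinset (T : Finset (G ⧸ N)) :
    (preimageMkFinset N T : Set G) = mk ⁻¹' (T : Set (G ⧸ N)) :=
  Set.Finite.coe_toFinset _

@[simp]
lemma mem_preimageMkFinset {T : Finset (G ⧸ N)} {g : G} :
    g ∈ preimageMkFinset N T ↔ (g : G ⧸ N) ∈ T :=
  Set.Finite.mem_toFinset _

lemma card_preimageMkFinset (T : Finset (G ⧸ N)) :
    (preimageMkFinset N T).card = Nat.card N * T.card := by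
  rw [← Set.ncard_coe_finset, coe_preimageMkFinset, ← Nat.card_coe_set_eq,
    Nat.card_congr (preimageMkEquivSubgroupProdSet N _), Nat.card_prod, Nat.card_coe_set_eq,
    Set.ncard_coe_finset]

lemma image_mk_preimageMkFinset (T : Finset (G ⧸ N)) :
    (mk : G → G ⧸ N) '' (preimageMkFinset N T : Set G) = T := by
  rw [coe_preimageMkFinset]
  exact Set.image_preimage_eq _ mk_surjective

lemma pow_preimageMkFinset_subset [N.Normal] [DecidableEq G] [DecidableEq (G ⧸ N)]
    (T : Finset (G ⧸ N)) (n : ℕ) : preimageMkFinset N T ^ n ⊆ preimageMkFinset N (T ^ n) := by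
  have hT : (preimageMkFinset N T).image (mk' N) = T := by
    rw [← Finset.coe_inj, Finset.coe_image, coe_mk', image_mk_preimageMkFinset]
  intro g hg
  have hmk : mk' N g ∈ (preimageMkFinset N T ^ n).image (mk' N) := Finset.mem_image_of_mem _ hg
  rw [Finset.image_pow, hT] at hmk
  exact mem_preimageMkFinset.mpr hmk

end QuotientGroup

open QuotientGroup in
theorem helfgott_to_quotient_general {G : Type*} [Group G] [DecidableEq G]
    (N : Subgroup G) [N.Normal] [Finite N] [DecidableEq (G ⧸ N)]
    (c δ : ℝ)
    (hHelf : ∀ A : Finset G, ¬ VirtuallyNilpotent ↥(Subgroup.closure (A : Set G)) →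
      c * (A.card : ℝ) ^ (1 + δ) ≤ ((A ^ 3).card : ℝ)) :
    ∀ S : Finset (G ⧸ N), ¬ VirtuallyNilpotent ↥(Subgroup.closure (S : Set (G ⧸ N))) →
      (c * (Nat.card N : ℝ) ^ δ) * (S.card : ℝ) ^ (1 + δ) ≤ ((S ^ 3).card : ℝ) := by
  intro S hS
  have hB : ¬ VirtuallyNilpotent (Subgroup.closure (preimageMkFinset N S : Set G)) :=
    fun h => by
      have hS' := h.closure_image (mk' N)
      rw [coe_mk', image_mk_preimageMkFinset] at hS'
      exact hS hS'
  set B := preimageMkFinset N S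
  have hn : (0 : ℝ) < Nat.card N := by exact_mod_cast Nat.card_pos
  have hB3 : ((B ^ 3).card : ℝ) ≤ Nat.card N * (S ^ 3).card := by
    exact_mod_cast (Finset.card_le_card (pow_preimageMkFinset_subset S 3)).trans_eq
      (card_preimageMkFinset _)
  refine le_of_mul_le_mul_left ?_ hn
  calc (Nat.card N : ℝ) * (c * (Nat.card N : ℝ) ^ δ * (S.card : ℝ) ^ (1 + δ))
      = c * ((Nat.card N * S.card : ℕ) : ℝ) ^ (1 + δ) := by
        rw [Nat.cast_mul, Real.mul_rpow hn.le (Nat.cast_nonneg _), Real.rpow_add hn, Real.rpow_one]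
        ring
    _ = c * (B.card : ℝ) ^ (1 + δ) := by rw [card_preimageMkFinset]
    _ ≤ (B ^ 3).card := hHelf B hB
    _ ≤ Nat.card N * (S ^ 3).card := hB3

/-- Helfgott growth passes from `G` to `G/N` for finite normal `N`. -/
theorem helfgott_to_quotient {G : Type*} [Group G] [DecidableEq G]
    (N : Subgroup G) [N.Normal] [Finite N] [DecidableEq (G ⧸ N)]
    (c δ : ℝ) (hc : 0 < c) (hδ : 0 < δ)
    (hHelf : ∀ A : Finset G, ¬ VirtuallyNilpotent ↥(Subgroup.closure (A : Set G)) →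
      c * (A.card : ℝ) ^ (1 + δ) ≤ ((A ^ 3).card : ℝ)) :
    ∀ S : Finset (G ⧸ N), ¬ VirtuallyNilpotent ↥(Subgroup.closure (S : Set (G ⧸ N))) →
      (c * (Nat.card N : ℝ) ^ δ) * (S.card : ℝ) ^ (1 + δ) ≤ ((S ^ 3).card : ℝ) :=
  helfgott_to_quotient_general N c δ hHelf
end
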